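/- In the standing setup, suppose that Yw = (q+1)w and Y'w = (q+1)w for all w ∈ Υ² (this holds as a consequence of the Hecke relation since Im Y = Im Y' = Υ²). Then ℓ_{xy}(x) = ℓ_{xx}(y) and ℓ'_{xy}(x) = ℓ'_{xx}(y) for all x,y ∈ V. -/
import Mathlib


open TensorProduct LinearMap

noncomputable section

variable (k V : Type) [Field k] [AddCommGroup V] [Module k V]

/-- `R ⊗ Id` acting on `V ⊗ (V ⊗ V)`. -/
def op12 (R : V ⊗[k] V →ₗ[k] V ⊗[k] V) :
    V ⊗[k] (V ⊗[k] V) →ₗ[k] V ⊗[k] (V ⊗[k] V) :=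
  (TensorProduct.assoc k V V V).toLinearMap ∘ₗ LinearMap.rTensor V R ∘ₗ
    (TensorProduct.assoc k V V V).symm.toLinearMap

/-- `Id ⊗ R` acting on `V ⊗ (V ⊗ V)`. -/
def op23 (R : V ⊗[k] V →ₗ[k] V ⊗[k] V) :
    V ⊗[k] (V ⊗[k] V) →ₗ[k] V ⊗[k] (V ⊗[k] V) :=
  LinearMap.lTensor V R

/-- A Hecke symmetry with parameter `q`: an operator on `V ⊗ V` satisfying the braid
equation and the Hecke relation `(R - q·Id)(R + Id) = 0`, with `q ≠ 0`. -/
def IsHeckeSymmetry (q : k) (R : V ⊗[k] V →ₗ[k] V ⊗[k] V) : Prop :=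
  q ≠ 0 ∧
    op12 k V R ∘ₗ op23 k V R ∘ₗ op12 k V R = op23 k V R ∘ₗ op12 k V R ∘ₗ op23 k V R ∧
    (R - q • LinearMap.id) ∘ₗ (R + LinearMap.id) = 0

/-- `x ⋏ y = ζ(x) ⊗ y - ζ(y) ⊗ x`. -/
def wedge2 (ζ : V ≃ₗ[k] V) (x y : V) : V ⊗[k] V := ζ x ⊗ₜ[k] y - ζ y ⊗ₜ[k] x

/-- `Υ²`, the span of the tensors `x ⋏ y`. -/
def Ups2 (ζ : V ≃ₗ[k] V) : Submodule k (V ⊗[k] V) :=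
  Submodule.span k {w : V ⊗[k] V | ∃ x y : V, w = wedge2 k V ζ x y}

/-- `x ⋏ y ⋏ z`. -/
def wedge3 (ζ : V ≃ₗ[k] V) (x y z : V) : V ⊗[k] (V ⊗[k] V) :=
  ζ (ζ x) ⊗ₜ[k] (ζ y ⊗ₜ[k] z) + ζ (ζ y) ⊗ₜ[k] (ζ z ⊗ₜ[k] x) + ζ (ζ z) ⊗ₜ[k] (ζ x ⊗ₜ[k] y)
    - ζ (ζ x) ⊗ₜ[k] (ζ z ⊗ₜ[k] y) - ζ (ζ y) ⊗ₜ[k] (ζ x ⊗ₜ[k] z) - ζ (ζ z) ⊗ₜ[k] (ζ y ⊗ₜ[k] x)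

/-- `Υ³`, the span of the tensors `x ⋏ y ⋏ z` (which coincides with
`(V ⊗ Υ²) ∩ (Υ² ⊗ V)`). -/
def Ups3 (ζ : V ≃ₗ[k] V) : Submodule k (V ⊗[k] (V ⊗[k] V)) :=
  Submodule.span k {t : V ⊗[k] (V ⊗[k] V) | ∃ x y z : V, t = wedge3 k V ζ x y z}

/-- The bilinear extension `w ↦ x ⋏ w` of the wedge multiplication `V × Υ² → Υ³`:
on elements of `Υ²` it satisfies `x ⋏ (y ⋏ z) = x ⋏ y ⋏ z`. -/
def wedge31 (ζ : V ≃ₗ[k] V) (x : V) : V ⊗[k] V →ₗ[k] V ⊗[k] (V ⊗[k] V) :=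
  TensorProduct.mk k V (V ⊗[k] V) (ζ (ζ x)) +
    (TensorProduct.assoc k V V V).toLinearMap ∘ₗ
      ((TensorProduct.mk k (V ⊗[k] V) V).flip x ∘ₗ
        TensorProduct.map ζ.toLinearMap ζ.toLinearMap) -
    TensorProduct.map ζ.toLinearMap (TensorProduct.mk k V V (ζ x))

/-- The skewsymmetrizer `Y = q·Id - R`. -/
def skewY (q : k) (R : V ⊗[k] V →ₗ[k] V ⊗[k] V) : V ⊗[k] V →ₗ[k] V ⊗[k] V :=
  q • LinearMap.id - R

/-- `R' = (ζ⁻¹ ⊗ ζ⁻¹) ∘ R ∘ (ζ ⊗ ζ)`. -/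
def Rprime (ζ : V ≃ₗ[k] V) (R : V ⊗[k] V →ₗ[k] V ⊗[k] V) :
    V ⊗[k] V →ₗ[k] V ⊗[k] V :=
  TensorProduct.map ζ.symm.toLinearMap ζ.symm.toLinearMap ∘ₗ R ∘ₗ
    TensorProduct.map ζ.toLinearMap ζ.toLinearMap

/-- `ℓ_{xy}(z) = ω̃(x ⋏ Y(ζ(y) ⊗ z))`, where `Ω` is a linear extension of `ω̃` to
`V ⊗ V ⊗ V`. -/
def ell (ζ : V ≃ₗ[k] V) (Y : V ⊗[k] V →ₗ[k] V ⊗[k] V)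
    (Ω : V ⊗[k] (V ⊗[k] V) →ₗ[k] k) (x y : V) : Module.Dual k V :=
  Ω ∘ₗ wedge31 k V ζ x ∘ₗ Y ∘ₗ TensorProduct.mk k V V (ζ y)

/-- The linear forms `ℓ_{xy}` associated with the Hecke symmetry `R`. -/
def ellF (ζ : V ≃ₗ[k] V) (q : k) (R : V ⊗[k] V →ₗ[k] V ⊗[k] V)
    (Ω : V ⊗[k] (V ⊗[k] V) →ₗ[k] k) (x y : V) : Module.Dual k V :=
  ell k V ζ (skewY k V q R) Ω x y

/-- The linear forms `ℓ'_{xy}` associated with the twisted Hecke symmetry `R'`. -/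
def ellF' (ζ : V ≃ₗ[k] V) (q : k) (R : V ⊗[k] V →ₗ[k] V ⊗[k] V)
    (Ω : V ⊗[k] (V ⊗[k] V) →ₗ[k] k) (x y : V) : Module.Dual k V :=
  ell k V ζ (skewY k V q (Rprime k V ζ R)) Ω x y


lemma wedge31_wedge2 (ζ : V ≃ₗ[k] V) (x y z : V) :
    wedge31 k V ζ x (wedge2 k V ζ y z) = wedge3 k V ζ x y z := by
  simp only [wedge31, wedge2, wedge3, LinearMap.sub_apply, LinearMap.add_apply,
    LinearMap.comp_apply, map_sub, TensorProduct.map_tmul, TensorProduct.mk_apply,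
    LinearMap.flip_apply, TensorProduct.assoc_tmul, TensorProduct.tmul_sub,
    LinearEquiv.coe_coe]
  abel

lemma ell_key (ζ : V ≃ₗ[k] V) (q : k) (Y : V ⊗[k] V →ₗ[k] V ⊗[k] V)
    (ω : AlternatingMap k V k (Fin 3)) (Ω : V ⊗[k] (V ⊗[k] V) →ₗ[k] k)
    (hΩ : ∀ x y z : V, Ω (wedge3 k V ζ x y z) = ω ![x, y, z])
    (hactY : ∀ w ∈ Ups2 k V ζ, Y w = (q + 1) • w) (x y : V) :
    ell k V ζ Y Ω x y x = ell k V ζ Y Ω x x y := by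
  have hm : wedge2 k V ζ y x ∈ Ups2 k V ζ := Submodule.subset_span ⟨y, x, rfl⟩
  have h1 : Y (ζ y ⊗ₜ[k] x) - Y (ζ x ⊗ₜ[k] y) = (q + 1) • wedge2 k V ζ y x := by
    rw [← map_sub]; exact hactY _ hm
  have h2 : ell k V ζ Y Ω x y x - ell k V ζ Y Ω x x y
      = (q + 1) • Ω (wedge3 k V ζ x y x) := by
    simp only [ell, LinearMap.comp_apply, TensorProduct.mk_apply]
    rw [← map_sub, ← map_sub, h1, map_smul, map_smul, wedge31_wedge2]
  have h3 : (ω ![x, y, x] : k) = 0 :=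
    ω.map_eq_zero_of_eq ![x, y, x] (i := 0) (j := 2) rfl (by decide)
  have := h2
  rw [hΩ, h3, smul_zero, sub_eq_zero] at this
  exact this

theorem stmt3 (hdim : Module.finrank k V = 3) (ζ : V ≃ₗ[k] V) (q : k)
    (R : V ⊗[k] V →ₗ[k] V ⊗[k] V) (hR : IsHeckeSymmetry k V q R)
    (hY : LinearMap.range (skewY k V q R) = Ups2 k V ζ)
    (ω : AlternatingMap k V k (Fin 3)) (hω : ω ≠ 0)
    (Ω : V ⊗[k] (V ⊗[k] V) →ₗ[k] k)
    (hΩ : ∀ x y z : V, Ω (wedge3 k V ζ x y z) = ω ![x, y, z])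
    -- `Y` and `Y'` act on `Υ²` as `(q+1)` times the identity
    (hact : ∀ w ∈ Ups2 k V ζ, skewY k V q R w = (q + 1) • w ∧
      skewY k V q (Rprime k V ζ R) w = (q + 1) • w) :
    ∀ x y : V,
      ellF k V ζ q R Ω x y x = ellF k V ζ q R Ω x x y ∧
      ellF' k V ζ q R Ω x y x = ellF' k V ζ q R Ω x x y := by
  intro x y
  refine ⟨ell_key k V ζ q (skewY k V q R) ω Ω hΩ (fun w hw => (hact w hw).1) x y,
    ell_key k V ζ q (skewY k V q (Rprime k V ζ R)) ω Ω hΩ (fun w hw => (hact w hw).2) x y⟩
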